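/- arXiv:1508.01721 — 4 statements merged into one kernel-verified Lean document; each statement's English description precedes it below -/
import Mathlib

section
/- Let m ≥ 3 and t ≥ 1, and for i ∈ ℤ/m set g_i = s_i s_{i+m} s_{i+2m} ⋯ s_{i+(t−1)m} ∈ B(Ã_{tm−1}) (the generators on the right indexed by the corresponding residues in ℤ/tm). Then g_i g_{i+1} g_i = g_{i+1} g_i g_{i+1} for all i ∈ ℤ/m, and g_i g_j = g_j g_i for all i, j ∈ ℤ/m with i − j ≠ 1, −1. Consequently, there is a group homomorphism ψ : B(Ã_{m−1}) → B(Ã_{tm−1}) with ψ(s_i) = g_i for all i ∈ ℤ/m. -/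
/-- The braid relation word `s_i s_j s_i (s_j s_i s_j)⁻¹` in a free group. -/
def braidRelWord {I : Type*} (i j : I) : FreeGroup I :=
  FreeGroup.of i * FreeGroup.of j * FreeGroup.of i *
    (FreeGroup.of j * FreeGroup.of i * FreeGroup.of j)⁻¹

/-- The commutation relation word `s_i s_j (s_j s_i)⁻¹` in a free group. -/
def commRelWord {I : Type*} (i j : I) : FreeGroup I :=
  FreeGroup.of i * FreeGroup.of j * (FreeGroup.of j * FreeGroup.of i)⁻¹

/-- The defining relations of the affine braid group `B(Ã_{n-1})`: for `n ≥ 3` the braid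
relations `s_i s_{i+1} s_i = s_{i+1} s_i s_{i+1}` (`i ∈ ℤ/n`) and the commutation relations
`s_i s_j = s_j s_i` for `i - j ≠ ±1`; for `n = 2` there are no relations, so that
`B(Ã_1)` is the free group on two generators. -/
def affineBraidRels (n : ℕ) : Set (FreeGroup (ZMod n)) :=
  if n ≤ 2 then ∅
  else {r | (∃ i : ZMod n, r = braidRelWord i (i + 1)) ∨
            (∃ i j : ZMod n, i - j ≠ 1 ∧ i - j ≠ -1 ∧ r = commRelWord i j)}

/-- The affine braid group `B(Ã_{n-1})`. -/
abbrev AffineBraidGroup (n : ℕ) := PresentedGroup (affineBraidRels n)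

/-- The generator `s_i` of the affine braid group `B(Ã_{n-1})`, `i ∈ ℤ/n`. -/
def affineBraidGen (n : ℕ) (i : ZMod n) : AffineBraidGroup n := PresentedGroup.of i

/-- The element `g_i = s_i s_{i+m} s_{i+2m} ⋯ s_{i+(t-1)m}` of the affine braid group
`B(Ã_{tm−1})`, for `i ∈ ℤ/m` (the generators on the right indexed by the corresponding
residues in `ℤ/tm`). -/
def liftedGen (m t : ℕ) (i : ZMod m) : AffineBraidGroup (t * m) :=
  ((List.range t).map fun s =>
    affineBraidGen (t * m) ((i.val + s * m : ℕ) : ZMod (t * m))).prod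

/-!
The factors `s_{i+sm}` (`s < t`) of `g_i` pairwise commute, and so do those of `g_{i+1}`. Pairing
`s_{x+sm}` with `s_{x+1+sm}`, the two factors of a pair braid while factors from different pairs
commute, and a product of such pairs braids (induction on `t`). When `i = m - 1` the factors of
`g_0` are those of `s_m s_{2m} ⋯ s_{tm}` rotated cyclically, which does not change their product.
-/

open PresentedGroup

theorem affineBraidGen_braid {n : ℕ} (hn : 3 ≤ n) (i : ZMod n) :
    affineBraidGen n i * affineBraidGen n (i + 1) * affineBraidGen n i =
      affineBraidGen n (i + 1) * affineBraidGen n i * affineBraidGen n (i + 1) := by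
  have hmem : braidRelWord i (i + 1) ∈ affineBraidRels n := by
    rw [affineBraidRels, if_neg (by omega)]
    exact Or.inl ⟨i, rfl⟩
  have h := mk_eq_mk_of_mul_inv_mem hmem
  simp only [map_mul] at h
  exact h

theorem affineBraidGen_commute {n : ℕ} (hn : 3 ≤ n) (i j : ZMod n) (h1 : i - j ≠ 1)
    (h2 : i - j ≠ -1) : Commute (affineBraidGen n i) (affineBraidGen n j) := by
  have hmem : commRelWord i j ∈ affineBraidRels n := by
    rw [affineBraidRels, if_neg (by omega)]
    exact Or.inr ⟨i, j, h1, h2, rfl⟩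
  have h := mk_eq_mk_of_mul_inv_mem hmem
  simp only [map_mul] at h
  exact h

theorem lift_eq_one_of_mem_affineBraidRels {G : Type*} [Group G] {n : ℕ} {f : ZMod n → G}
    (hbraid : ∀ i, f i * f (i + 1) * f i = f (i + 1) * f i * f (i + 1))
    (hcomm : ∀ i j, i - j ≠ 1 → i - j ≠ -1 → Commute (f i) (f j)) :
    ∀ r ∈ affineBraidRels n, FreeGroup.lift f r = 1 := by
  intro r hr
  rw [affineBraidRels] at hr
  split_ifs at hr
  · exact absurd hr (Set.notMem_empty r)
  · rcases hr with ⟨i, rfl⟩ | ⟨i, j, h1, h2, rfl⟩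
    · simp [braidRelWord, hbraid]
    · simp [commRelWord, (hcomm i j h1 h2).eq]

section ListProd
variable {G : Type*} [Group G]

theorem commute_prod_range_right {x : G} {t : ℕ} {f : ℕ → G}
    (h : ∀ s < t, Commute x (f s)) :
    Commute x ((List.range t).map f).prod :=
  Commute.list_prod_right _ _ (by simpa using h)

theorem commute_prod_range {t : ℕ} {a b : ℕ → G}
    (h : ∀ s < t, ∀ s' < t, Commute (a s) (b s')) :
    Commute ((List.range t).map a).prod ((List.range t).map b).prod :=
  commute_prod_range_right fun s' hs' =>
    (commute_prod_range_right fun s hs => (h s hs s' hs').symm).symm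

theorem mul_braid_mul {A B a b : G} (haA : Commute a A) (haB : Commute a B)
    (hbA : Commute b A) : A * a * (B * b) * (A * a) = A * B * A * (a * b * a) := by
  simp only [mul_assoc]
  rw [haB.left_comm, hbA.left_comm, haA.left_comm]

theorem prod_range_braid {t : ℕ} {a b : ℕ → G}
    (haa : ∀ s < t, ∀ s' < t, Commute (a s) (a s'))
    (hbb : ∀ s < t, ∀ s' < t, Commute (b s) (b s'))
    (hab : ∀ s < t, ∀ s' < t, s ≠ s' → Commute (a s) (b s'))
    (hbr : ∀ s < t, a s * b s * a s = b s * a s * b s) :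
    ((List.range t).map a).prod * ((List.range t).map b).prod * ((List.range t).map a).prod =
      ((List.range t).map b).prod * ((List.range t).map a).prod *
        ((List.range t).map b).prod := by
  induction t with
  | zero => simp
  | succ t ih =>
    have haA := commute_prod_range_right (t := t) fun s hs => haa t (by omega) s (by omega)
    have haB := commute_prod_range_right (t := t) fun s hs =>
      hab t (by omega) s (by omega) (by omega)
    have hbA := commute_prod_range_right (t := t) fun s hs =>
      (hab s (by omega) t (by omega) (by omega)).symm
    have hbB := commute_prod_range_right (t := t) fun s hs => hbb t (by omega) s (by omega)
    simp only [List.prod_range_succ]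
    rw [mul_braid_mul haA haB hbA, mul_braid_mul hbB hbA haB, hbr t (by omega),
      ih (fun s hs s' hs' => haa s (by omega) s' (by omega))
        (fun s hs s' hs' => hbb s (by omega) s' (by omega))
        (fun s hs s' hs' => hab s (by omega) s' (by omega)) (fun s hs => hbr s (by omega))]

theorem prod_range_map_succ_of_periodic {t : ℕ} {f : ℕ → G} (hper : f t = f 0)
    (hcomm : ∀ s < t, Commute (f 0) (f s)) :
    ((List.range t).map fun s => f (s + 1)).prod = ((List.range t).map f).prod := by
  have h := (List.prod_range_succ' f t).symm.trans (List.prod_range_succ f t)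
  rw [hper, ← (commute_prod_range_right hcomm).eq] at h
  exact mul_left_cancel h

end ListProd

theorem eq_of_natCast_mul_eq {m t s s' : ℕ} (hm : 0 < m) (hs : s < t) (hs' : s' < t)
    (h : ((s * m : ℕ) : ZMod (t * m)) = ((s' * m : ℕ) : ZMod (t * m))) : s = s' := by
  rw [ZMod.natCast_eq_natCast_iff] at h
  exact Nat.ModEq.eq_of_lt_of_lt (Nat.ModEq.mul_right_cancel' hm.ne' h) hs hs'

/-- Allowing any `x : ℕ` rather than `i.val` as in `liftedGen` lets `g_{i+1}` be written as
`stridedGen m t (i.val + 1)` even when `i.val + 1 = m`. -/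
def stridedGen (m t x : ℕ) : AffineBraidGroup (t * m) :=
  ((List.range t).map fun s => affineBraidGen (t * m) ((x + s * m : ℕ) : ZMod (t * m))).prod

section Strided
variable {m t : ℕ}

theorem commute_affineBraidGen_of_natCast (hm : 3 ≤ m) (ht : 0 < t) {x y : ℕ}
    (h1 : (x : ZMod m) - y ≠ 1) (h2 : (x : ZMod m) - y ≠ -1) :
    Commute (affineBraidGen (t * m) x) (affineBraidGen (t * m) y) := by
  refine affineBraidGen_commute (hm.trans (Nat.le_mul_of_pos_left m ht)) _ _
    (fun h => h1 ?_) (fun h => h2 ?_)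
  · simpa using congrArg (ZMod.castHom (dvd_mul_left m t) (ZMod m)) h
  · simpa using congrArg (ZMod.castHom (dvd_mul_left m t) (ZMod m)) h

theorem commute_affineBraidGen_of_natCast_eq (hm : 3 ≤ m) (ht : 0 < t) {x y : ℕ}
    (h : (x : ZMod m) = y) : Commute (affineBraidGen (t * m) x) (affineBraidGen (t * m) y) := by
  have : Fact (1 < m) := ⟨by omega⟩
  refine commute_affineBraidGen_of_natCast hm ht ?_ ?_ <;> rw [h, sub_self]
  · exact zero_ne_one
  · exact (neg_ne_zero.mpr one_ne_zero).symm

theorem stridedGen_add_self (hm : 3 ≤ m) (x : ℕ) :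
    stridedGen m t (x + m) = stridedGen m t x := by
  set f : ℕ → AffineBraidGroup (t * m) := fun s => affineBraidGen (t * m) ((x + s * m : ℕ))
  have hper : f t = f 0 := by
    simp only [f, Nat.cast_add, ZMod.natCast_self, zero_mul, add_zero, Nat.cast_zero]
  have hcomm : ∀ s < t, Commute (f 0) (f s) := fun s hs =>
    commute_affineBraidGen_of_natCast_eq hm (by omega) (by simp)
  calc stridedGen m t (x + m) = ((List.range t).map fun s => f (s + 1)).prod := by
        simp only [stridedGen, f, add_mul, one_mul, ← add_assoc, add_right_comm x m]
    _ = stridedGen m t x := prod_range_map_succ_of_periodic hper hcomm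

theorem stridedGen_add_mul_self (hm : 3 ≤ m) (x q : ℕ) :
    stridedGen m t (x + q * m) = stridedGen m t x := by
  induction q with
  | zero => simp
  | succ q ih => rw [add_mul, one_mul, ← add_assoc, stridedGen_add_self hm, ih]

theorem liftedGen_natCast (hm : 3 ≤ m) (x : ℕ) : liftedGen m t x = stridedGen m t x := by
  show stridedGen m t (x : ZMod m).val = _
  rw [ZMod.val_natCast, ← stridedGen_add_mul_self hm (x % m) (x / m), Nat.mod_add_div']

theorem stridedGen_commute (hm : 3 ≤ m) {x y : ℕ} (h1 : (x : ZMod m) - y ≠ 1)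
    (h2 : (x : ZMod m) - y ≠ -1) : Commute (stridedGen m t x) (stridedGen m t y) :=
  commute_prod_range fun s hs _ _ =>
    commute_affineBraidGen_of_natCast hm (by omega) (by simpa using h1) (by simpa using h2)

theorem stridedGen_braid (hm : 3 ≤ m) (x : ℕ) :
    stridedGen m t x * stridedGen m t (x + 1) * stridedGen m t x =
      stridedGen m t (x + 1) * stridedGen m t x * stridedGen m t (x + 1) := by
  have : Fact (2 < m) := ⟨hm⟩
  refine prod_range_braid
    (fun s hs _ _ => commute_affineBraidGen_of_natCast_eq hm (by omega) (by simp))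
    (fun s hs _ _ => commute_affineBraidGen_of_natCast_eq hm (by omega) (by simp))
    (fun s hs s' hs' hne => ?_) (fun s hs => ?_)
  · -- the difference of the indices is `-1` modulo `m`, and `-1` modulo `tm` only if `s = s'`
    refine affineBraidGen_commute (hm.trans (Nat.le_mul_of_pos_left m (by omega))) _ _
      (fun h => ZMod.neg_one_ne_one (n := m) ?_)
      (fun h => hne (eq_of_natCast_mul_eq (by omega : 0 < m) hs hs' ?_))
    · simpa using congrArg (ZMod.castHom (dvd_mul_left m t) (ZMod m)) h
    · push_cast at h ⊢
      linear_combination h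
  · have hsucc :
        ((x + 1 + s * m : ℕ) : ZMod (t * m)) = ((x + s * m : ℕ) : ZMod (t * m)) + 1 := by
      push_cast; ring
    rw [hsucc]
    exact affineBraidGen_braid (hm.trans (Nat.le_mul_of_pos_left m (by omega))) _

end Strided

theorem liftedGen_relations_general (m t : ℕ) (hm : 3 ≤ m) :
    (∀ i : ZMod m,
      liftedGen m t i * liftedGen m t (i + 1) * liftedGen m t i =
        liftedGen m t (i + 1) * liftedGen m t i * liftedGen m t (i + 1)) ∧
    (∀ i j : ZMod m, i - j ≠ 1 → i - j ≠ -1 →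
      liftedGen m t i * liftedGen m t j = liftedGen m t j * liftedGen m t i) ∧
    ∃ ψ : AffineBraidGroup m →* AffineBraidGroup (t * m),
      ∀ i : ZMod m, ψ (affineBraidGen m i) = liftedGen m t i := by
  have : NeZero m := ⟨by omega⟩
  have braid : ∀ i : ZMod m, liftedGen m t i * liftedGen m t (i + 1) * liftedGen m t i =
      liftedGen m t (i + 1) * liftedGen m t i * liftedGen m t (i + 1) := by
    intro i
    obtain ⟨x, rfl⟩ := ZMod.natCast_zmod_surjective i
    rw [← Nat.cast_add_one, liftedGen_natCast hm, liftedGen_natCast hm]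
    exact stridedGen_braid hm x
  have comm : ∀ i j : ZMod m, i - j ≠ 1 → i - j ≠ -1 →
      Commute (liftedGen m t i) (liftedGen m t j) := by
    intro i j h1 h2
    obtain ⟨x, rfl⟩ := ZMod.natCast_zmod_surjective i
    obtain ⟨y, rfl⟩ := ZMod.natCast_zmod_surjective j
    rw [liftedGen_natCast hm, liftedGen_natCast hm]
    exact stridedGen_commute hm h1 h2
  exact ⟨braid, fun i j h1 h2 => (comm i j h1 h2).eq,
    toGroup (lift_eq_one_of_mem_affineBraidRels braid comm), fun _ => toGroup.of _⟩

/-- Let `m ≥ 3`, `t ≥ 1` and for `i ∈ ℤ/m` set `g_i = s_i s_{i+m} ⋯ s_{i+(t−1)m} ∈ B(Ã_{tm−1})`.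
Then `g_i g_{i+1} g_i = g_{i+1} g_i g_{i+1}` for all `i ∈ ℤ/m`, `g_i g_j = g_j g_i` for all
`i, j ∈ ℤ/m` with `i − j ≠ 1, −1`, and consequently there is a group homomorphism
`ψ : B(Ã_{m−1}) → B(Ã_{tm−1})` with `ψ(s_i) = g_i` for all `i ∈ ℤ/m`. -/
theorem liftedGen_relations (m t : ℕ) (hm : 3 ≤ m) (ht : 1 ≤ t) :
    (∀ i : ZMod m,
      liftedGen m t i * liftedGen m t (i + 1) * liftedGen m t i =
        liftedGen m t (i + 1) * liftedGen m t i * liftedGen m t (i + 1)) ∧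
    (∀ i j : ZMod m, i - j ≠ 1 → i - j ≠ -1 →
      liftedGen m t i * liftedGen m t j = liftedGen m t j * liftedGen m t i) ∧
    ∃ ψ : AffineBraidGroup m →* AffineBraidGroup (t * m),
      ∀ i : ZMod m, ψ (affineBraidGen m i) = liftedGen m t i :=
  liftedGen_relations_general m t hm
end

section
/- Let m ≥ 2. Each σ_i (i ∈ ℤ/m) is an automorphism of the free group F_{m+1}, and when m ≥ 3 these automorphisms satisfy the defining relations of B(Ã_{m−1}): σ_i σ_{i+1} σ_i = σ_{i+1} σ_i σ_{i+1} for all i ∈ ℤ/m, and σ_i σ_j = σ_j σ_i for all i, j ∈ ℤ/m with i − j ≠ 1, −1. Consequently, for every m ≥ 2 there is a group homomorphism B(Ã_{m−1}) → Aut(F_{m+1}) sending s_i to σ_i for all i ∈ ℤ/m. -/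
/-- The free group `F_{m+1}` on generators `y_0, …, y_{m−1}, y`: `y_j = of (some j)` for
`j ∈ ℤ/m` and `y = of none`. The map `σ_i` on generators: `σ_i(y_i) = y_{i+1}`,
`σ_i(y_{i+1}) = y_{i+1}⁻¹ y_i y_{i+1}`, `σ_i(y_j) = y_j` for `j ≠ i, i+1`, `σ_i(y) = y`. -/
def sigmaMap (m : ℕ) (i : ZMod m) :
    Option (ZMod m) → FreeGroup (Option (ZMod m))
  | none => FreeGroup.of none
  | some j =>
    if j = i then FreeGroup.of (some (i + 1))
    else if j = i + 1 then
      (FreeGroup.of (some (i + 1)))⁻¹ * FreeGroup.of (some i) * FreeGroup.of (some (i + 1))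
    else FreeGroup.of (some j)

/-- The endomorphism `σ_i` of the free group `F_{m+1}` induced by `sigmaMap`. -/
def sigmaHom (m : ℕ) (i : ZMod m) :
    FreeGroup (Option (ZMod m)) →* FreeGroup (Option (ZMod m)) :=
  FreeGroup.lift (sigmaMap m i)

/-!
Endomorphisms of a free group agree once they agree on the generators, and `σ_i` fixes every
`y_k` with `k ≠ i, i + 1`. So each relation reduces to a free group identity in the few letters
it involves: `y_i, y_{i+1}, y_{i+2}` for the braid relation, and for the commutation relation
`y_i, y_{i+1}, y_j, y_{j+1}`, which are pairwise distinct when `i ≠ j` and `i - j ≠ ±1`.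
The inverse of `σ_i` is `y_{i+1} ↦ y_i`, `y_i ↦ y_i y_{i+1} y_i⁻¹`, and the homomorphism out of
`B(Ã_{m−1})` comes from the universal property of the presentation.
-/

open FreeGroup (of lift_apply_of)

section Presentation

variable {G : Type*} [Group G]

theorem lift_braidRelWord_eq_one_iff {I : Type*} (f : I → G) (i j : I) :
    FreeGroup.lift f (braidRelWord i j) = 1 ↔ f i * f j * f i = f j * f i * f j := by
  simp only [braidRelWord, map_mul, map_inv, lift_apply_of, mul_inv_eq_one]

theorem lift_commRelWord_eq_one_iff {I : Type*} (f : I → G) (i j : I) :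
    FreeGroup.lift f (commRelWord i j) = 1 ↔ f i * f j = f j * f i := by
  simp only [commRelWord, map_mul, map_inv, lift_apply_of, mul_inv_eq_one]

theorem AffineBraidGroup.exists_hom_of_relations {n : ℕ} (f : ZMod n → G)
    (hbraid : 3 ≤ n → ∀ i, f i * f (i + 1) * f i = f (i + 1) * f i * f (i + 1))
    (hcomm : 3 ≤ n → ∀ i j, i - j ≠ 1 → i - j ≠ -1 → f i * f j = f j * f i) :
    ∃ φ : AffineBraidGroup n →* G, ∀ i, φ (affineBraidGen n i) = f i := by
  have hrels : ∀ r ∈ affineBraidRels n, FreeGroup.lift f r = 1 := by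
    intro r hr
    unfold affineBraidRels at hr
    split_ifs at hr with hn
    · exact absurd hr (Set.notMem_empty r)
    · have hn : 3 ≤ n := by omega
      rcases hr with ⟨i, rfl⟩ | ⟨i, j, h₁, h₂, rfl⟩
      · exact (lift_braidRelWord_eq_one_iff f _ _).2 (hbraid hn i)
      · exact (lift_commRelWord_eq_one_iff f _ _).2 (hcomm hn i j h₁ h₂)
  exact ⟨PresentedGroup.toGroup hrels, fun i => PresentedGroup.toGroup.of hrels⟩

end Presentation

section Sigma

variable {m : ℕ} (i : ZMod m)

@[simp]
theorem sigmaHom_of_none : sigmaHom m i (of none) = of none := lift_apply_of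

@[simp]
theorem sigmaHom_of_self : sigmaHom m i (of (some i)) = of (some (i + 1)) := by
  simp [sigmaHom, sigmaMap]

@[simp]
theorem sigmaHom_of_succ [Nontrivial (ZMod m)] :
    sigmaHom m i (of (some (i + 1))) = (of (some (i + 1)))⁻¹ * of (some i) * of (some (i + 1)) := by
  simp [sigmaHom, sigmaMap]

theorem sigmaHom_of_of_ne {j : ZMod m} (h₀ : j ≠ i) (h₁ : j ≠ i + 1) :
    sigmaHom m i (of (some j)) = of (some j) := by
  simp [sigmaHom, sigmaMap, h₀, h₁]

def sigmaInvHom (m : ℕ) (i : ZMod m) : FreeGroup (Option (ZMod m)) →* FreeGroup (Option (ZMod m)) :=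
  FreeGroup.lift fun
    | none => of none
    | some j =>
      if j = i + 1 then of (some i)
      else if j = i then of (some i) * of (some (i + 1)) * (of (some i))⁻¹
      else of (some j)

theorem sigmaHom_comp_sigmaInvHom [Nontrivial (ZMod m)] :
    (sigmaHom m i).comp (sigmaInvHom m i) = MonoidHom.id _ := by
  refine FreeGroup.ext_hom _ _ ?_
  rintro (_ | j)
  · simp [sigmaInvHom]
  by_cases hj : j = i ∨ j = i + 1
  · rcases hj with rfl | rfl <;> simp [sigmaInvHom, mul_assoc]
  · push Not at hj
    simp [sigmaInvHom, sigmaHom_of_of_ne, hj]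

theorem sigmaInvHom_comp_sigmaHom [Nontrivial (ZMod m)] :
    (sigmaInvHom m i).comp (sigmaHom m i) = MonoidHom.id _ := by
  refine FreeGroup.ext_hom _ _ ?_
  rintro (_ | j)
  · simp [sigmaInvHom]
  by_cases hj : j = i ∨ j = i + 1
  · rcases hj with rfl | rfl <;> simp [sigmaInvHom, mul_assoc]
  · push Not at hj
    simp [sigmaInvHom, sigmaHom_of_of_ne, hj]

def sigmaMulEquiv (m : ℕ) [Nontrivial (ZMod m)] (i : ZMod m) :
    MulAut (FreeGroup (Option (ZMod m))) :=
  MonoidHom.toMulEquiv (sigmaHom m i) (sigmaInvHom m i) (sigmaInvHom_comp_sigmaHom i)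
    (sigmaHom_comp_sigmaInvHom i)

@[simp]
theorem sigmaMulEquiv_apply [Nontrivial (ZMod m)] (x : FreeGroup (Option (ZMod m))) :
    sigmaMulEquiv m i x = sigmaHom m i x :=
  rfl

theorem sigmaHom_braid (hm : 3 ≤ m) :
    (sigmaHom m i).comp ((sigmaHom m (i + 1)).comp (sigmaHom m i)) =
      (sigmaHom m (i + 1)).comp ((sigmaHom m i).comp (sigmaHom m (i + 1))) := by
  have : Fact (1 < m) := ⟨by omega⟩
  have h₂ : (2 : ZMod m) ≠ 0 := by
    exact_mod_cast (ZMod.natCast_eq_zero_iff 2 m).not.2 (Nat.not_dvd_of_pos_of_lt two_pos hm)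
  have h₀₂ : i + 1 + 1 ≠ i := by rwa [add_assoc, one_add_one_eq_two, Ne, add_eq_left]
  have h₀₁ : i ≠ i + 1 := by simp
  refine FreeGroup.ext_hom _ _ ?_
  rintro (_ | j)
  · simp
  by_cases hj : j = i ∨ j = i + 1 ∨ j = i + 1 + 1
  · rcases hj with rfl | rfl | rfl <;> simp [sigmaHom_of_of_ne, h₀₂, h₀₂.symm, h₀₁, mul_assoc]
  · push Not at hj
    simp [sigmaHom_of_of_ne, hj]

theorem sigmaHom_comm {i j : ZMod m} (h₁ : i - j ≠ 1) (h₂ : i - j ≠ -1) :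
    (sigmaHom m i).comp (sigmaHom m j) = (sigmaHom m j).comp (sigmaHom m i) := by
  rcases eq_or_ne i j with rfl | hij
  · rfl
  have : Nontrivial (ZMod m) := nontrivial_of_ne i j hij
  have hi₁ : i ≠ j + 1 := fun h => h₁ (by rw [h]; ring)
  have hj₁ : j ≠ i + 1 := fun h => h₂ (by rw [h]; ring)
  have h₁₁ : i + 1 ≠ j + 1 := by simpa using hij
  refine FreeGroup.ext_hom _ _ ?_
  rintro (_ | k)
  · simp
  by_cases hk : k = i ∨ k = i + 1 ∨ k = j ∨ k = j + 1
  · rcases hk with rfl | rfl | rfl | rfl <;>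
      simp [sigmaHom_of_of_ne, hij, hij.symm, hi₁, hi₁.symm, hj₁, hj₁.symm, h₁₁, h₁₁.symm]
  · push Not at hk
    simp [sigmaHom_of_of_ne, hk]

end Sigma

/-- Let `m ≥ 2`. Each `σ_i` (`i ∈ ℤ/m`) is an automorphism of the free group `F_{m+1}`, and
when `m ≥ 3` these automorphisms satisfy the defining relations of `B(Ã_{m−1})`:
`σ_i σ_{i+1} σ_i = σ_{i+1} σ_i σ_{i+1}` for all `i ∈ ℤ/m`, and `σ_i σ_j = σ_j σ_i` for all
`i, j ∈ ℤ/m` with `i − j ≠ 1, −1`. Consequently, for every `m ≥ 2` there is a group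
homomorphism `B(Ã_{m−1}) → Aut(F_{m+1})` sending `s_i` to `σ_i` for all `i ∈ ℤ/m`. -/
theorem sigmaHom_relations_and_hom (m : ℕ) (hm : 2 ≤ m) :
    (∀ i : ZMod m, Function.Bijective (sigmaHom m i)) ∧
    (3 ≤ m →
      (∀ i : ZMod m,
        (sigmaHom m i).comp ((sigmaHom m (i + 1)).comp (sigmaHom m i)) =
          (sigmaHom m (i + 1)).comp ((sigmaHom m i).comp (sigmaHom m (i + 1)))) ∧
      (∀ i j : ZMod m, i - j ≠ 1 → i - j ≠ -1 →
        (sigmaHom m i).comp (sigmaHom m j) = (sigmaHom m j).comp (sigmaHom m i))) ∧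
    ∃ Φ : AffineBraidGroup m →* MulAut (FreeGroup (Option (ZMod m))),
      ∀ (i : ZMod m) (x : FreeGroup (Option (ZMod m))),
        Φ (affineBraidGen m i) x = sigmaHom m i x := by
  have : Fact (1 < m) := ⟨hm⟩
  refine ⟨fun i => (sigmaMulEquiv m i).bijective, fun h₃ => ⟨fun i => sigmaHom_braid i h₃,
    fun _ _ => sigmaHom_comm⟩, ?_⟩
  obtain ⟨Φ, hΦ⟩ := AffineBraidGroup.exists_hom_of_relations (sigmaMulEquiv m)
    (fun h₃ i => MulEquiv.ext fun x => DFunLike.congr_fun (sigmaHom_braid i h₃) x)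
    (fun _ i j h₁ h₂ => MulEquiv.ext fun x => DFunLike.congr_fun (sigmaHom_comm h₁ h₂) x)
  exact ⟨Φ, fun i x => by rw [hΦ, sigmaMulEquiv_apply]⟩
end

section
/- For every c ∈ 𝒮_N(k), the element 1 − e_1 + u_c is a unit of 𝒩, and ρ ∘ μ_c = σ ∘ μ_c ∘ ρ, where σ is the inner automorphism of 𝒩 defined by σ(x) = (1 − e_1 + u_c)^{−1} x (1 − e_1 + u_c). In particular, ρ ∘ μ_c and μ_c ∘ ρ coincide modulo inner automorphisms. -/
/-- `pathProd e β i a` is the path `β_{i,a} = β_{i+a-1} ⋯ β_{i+1} β_i` of length `a`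
starting at the vertex `i` of the cyclic quiver with vertex set `ZMod q`
(with `pathProd e β i 0 = e i` the trivial path at `i`). -/
def pathProd {q : ℕ} {R : Type*} [Mul R] (e β : ZMod q → R) (i : ZMod q) : ℕ → R
  | 0 => e i
  | a + 1 => β (i + (a : ZMod q)) * pathProd e β i a

/-!
Write `w = 1 - e₁ + u_c`. Since `u_c` is a combination of loops at the vertex `1`, left
multiplication by `w` fixes every path not ending at `1`, so `μ_c` multiplies each arrow
`β_j e_j` on the left by `w`. The loops of `u_c` have length divisible by `nm`, so `ρ(u_c)`
is a combination of loops at `2` and `ρ(u_c) β₁ e₁ = β₁ e₁ u_c`; hence `ρ(w) β_j e_j = β_j e_j w`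
for every `j`. Together with `w e_i = e_i w` this gives `w ρ(μ_c g) = μ_c(ρ g) w` on the
generators `e_i`, `β_j e_j` of `𝒩`, hence everywhere. Finally `w` is the unit
`1 - e₁ + c₁ e₁` plus a commuting nilpotent, because the loops of positive length vanish in
high powers.
-/

open Set

theorem isUnit_one_sub_add_smul {k A : Type*} [CommSemiring k] [Ring A] [Algebra k A] {x : A}
    (hx : IsIdempotentElem x) {a : k} (ha : IsUnit a) : IsUnit (1 - x + a • x) := by
  obtain ⟨u, rfl⟩ := ha
  refine ⟨⟨1 - x + (u : k) • x, 1 - x + (↑u⁻¹ : k) • x, ?_, ?_⟩, rfl⟩ <;>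
  · simp only [mul_add, add_mul, mul_sub, sub_mul, smul_mul_assoc, mul_smul_comm, hx.eq, one_mul,
      mul_one, smul_add, smul_sub, smul_smul, Units.mul_inv, Units.inv_mul, one_smul]
    abel

theorem mul_map_eq_map_mul_of_adjoin_eq_top {k A S : Type*} [CommSemiring k] [Semiring A]
    [Semiring S] [Algebra k A] [Algebra k S] {s : Set A} (hs : Algebra.adjoin k s = ⊤)
    (f g : A →ₐ[k] S) (w : S) (hgen : ∀ x ∈ s, w * f x = g x * w) (x : A) :
    w * f x = g x * w := by
  have hx : x ∈ Algebra.adjoin k s := hs ▸ Algebra.mem_top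
  induction hx using Algebra.adjoin_induction with
  | mem x hx => exact hgen x hx
  | algebraMap r => simp [Algebra.commutes]
  | add x y _ _ hx hy => rw [map_add, map_add, mul_add, add_mul, hx, hy]
  | mul x y _ _ hx hy => rw [map_mul, map_mul, ← mul_assoc, hx, mul_assoc, hy, mul_assoc]

section CyclicPaths

variable {q : ℕ} {R : Type*} [Ring R]

def PathConcat (e β : ZMod q → R) : Prop :=
  ∀ (i j : ZMod q) (a b : ℕ), pathProd e β j a * pathProd e β i b =
    if j = i + b then pathProd e β i (a + b) else 0

variable {k : Type*} [CommSemiring k] [Algebra k R] {N : ℕ}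

/-- For `q = nm`, `loopSum e β c 1` is the element `u_c` and `vertexTwist e β c 1` is
`1 - e₁ + u_c`. -/
def loopSum (e β : ZMod q → R) (c : Fin N → k) (i : ZMod q) : R :=
  ∑ s, c s • pathProd e β i (s * q)

def vertexTwist (e β : ZMod q → R) (c : Fin N → k) (i : ZMod q) : R :=
  1 - e i + loopSum e β c i

variable {e β : ZMod q → R}

@[simp]
theorem pathProd_zero (i : ZMod q) : pathProd e β i 0 = e i := rfl

theorem pathProd_one (i : ZMod q) : pathProd e β i 1 = β i * e i := by
  simp [pathProd]

theorem pathProd_eq_zero_of_lt {L : ℕ} (hL : 0 < L)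
    (hmul : ∀ (i j : ZMod q) (a b : ℕ), a ≤ L → b ≤ L →
      pathProd e β j a * pathProd e β i b =
        if j = i + b ∧ a + b ≤ L then pathProd e β i (a + b) else 0)
    (i : ZMod q) {a : ℕ} (ha : L < a) : pathProd e β i a = 0 := by
  induction a, ha using Nat.le_induction with
  | base =>
    have hend : e (i + L) * pathProd e β i L = pathProd e β i L := by
      simpa using hmul i (i + L) 0 L (Nat.zero_le _) le_rfl
    calc pathProd e β i (L + 1) = pathProd e β (i + L) 1 * pathProd e β i L := by
          rw [pathProd, pathProd_one, mul_assoc, hend]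
      _ = 0 := by simp [hmul i (i + L) 1 L hL le_rfl]
  | succ a _ ih => rw [pathProd, ih, mul_zero]

theorem pathConcat_of_truncated {L : ℕ} (hL : 0 < L)
    (hmul : ∀ (i j : ZMod q) (a b : ℕ), a ≤ L → b ≤ L →
      pathProd e β j a * pathProd e β i b =
        if j = i + b ∧ a + b ≤ L then pathProd e β i (a + b) else 0) :
    PathConcat e β := by
  intro i j a b
  have hlong := pathProd_eq_zero_of_lt hL hmul
  by_cases hab : a + b ≤ L
  · simp [hmul i j a b (by omega) (by omega), hab]
  · rcases le_or_gt a L with ha | ha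
    · rcases le_or_gt b L with hb | hb
      · simp [hmul i j a b ha hb, hab, hlong i (not_le.mp hab)]
      · simp [hlong i hb, hlong i (not_le.mp hab)]
    · simp [hlong j ha, hlong i (not_le.mp hab)]

theorem vertex_mul_pathProd (h : PathConcat e β) (i j : ZMod q) (b : ℕ) :
    e j * pathProd e β i b = if j = i + b then pathProd e β i b else 0 := by
  simpa using h i j 0 b

theorem pathProd_mul_vertex (h : PathConcat e β) (i j : ZMod q) (a : ℕ) :
    pathProd e β j a * e i = if j = i then pathProd e β i a else 0 := by
  simpa using h i j a 0

theorem vertex_mul_vertex (h : PathConcat e β) (i j : ZMod q) :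
    e j * e i = if j = i then e i else 0 := by
  simpa using h i j 0 0

theorem pathProd_succ (h : PathConcat e β) (i : ZMod q) (a : ℕ) :
    pathProd e β i (a + 1) = pathProd e β (i + a) 1 * pathProd e β i a := by
  rw [h, if_pos rfl, add_comm]

theorem pathProd_pow_of_natCast_eq_zero (h : PathConcat e β) (i : ZMod q) {a : ℕ}
    (ha : (a : ZMod q) = 0) (M : ℕ) :
    pathProd e β i a ^ (M + 1) = pathProd e β i ((M + 1) * a) := by
  induction M with
  | zero => simp
  | succ M ih => rw [pow_succ, ih, h, if_pos (by simp [ha]), add_one_mul (M + 1)]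

theorem commute_pathProd_of_natCast_eq_zero (h : PathConcat e β) (i : ZMod q) {a b : ℕ}
    (ha : (a : ZMod q) = 0) (hb : (b : ZMod q) = 0) :
    Commute (pathProd e β i a) (pathProd e β i b) := by
  rw [Commute, SemiconjBy, h, h, if_pos (by simp [hb]), if_pos (by simp [ha]), add_comm]

theorem pathProd_succ_mul_arrow_of_natCast_eq_zero (h : PathConcat e β) (i : ZMod q) {a : ℕ}
    (ha : (a : ZMod q) = 0) :
    pathProd e β (i + 1) a * pathProd e β i 1 = pathProd e β i 1 * pathProd e β i a := by
  rw [h, h, if_pos (by simp), if_pos (by simp [ha]), add_comm]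

theorem isNilpotent_pathProd_of_natCast_eq_zero (h : PathConcat e β) {L : ℕ}
    (hlong : ∀ (i : ZMod q) (a : ℕ), L < a → pathProd e β i a = 0) (i : ZMod q) {a : ℕ}
    (ha : (a : ZMod q) = 0) (ha₀ : 0 < a) : IsNilpotent (pathProd e β i a) :=
  ⟨L + 1, by rw [pathProd_pow_of_natCast_eq_zero h i ha, hlong]; nlinarith⟩

theorem map_pathProd_of_rotate {F : Type*} [FunLike F R R] [MulHomClass F R R] (f : F)
    (hfe : ∀ i, f (e i) = e (i + 1)) (hfβ : ∀ i, f (β i) = β (i + 1)) (i : ZMod q) (a : ℕ) :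
    f (pathProd e β i a) = pathProd e β (i + 1) a := by
  induction a with
  | zero => exact hfe i
  | succ a ih => rw [pathProd, map_mul, hfβ, ih, pathProd, add_right_comm]

variable {c : Fin N → k}

theorem vertex_mul_loopSum (h : PathConcat e β) (i : ZMod q) :
    e i * loopSum e β c i = loopSum e β c i := by
  simp only [loopSum, Finset.mul_sum, mul_smul_comm, vertex_mul_pathProd h]
  simp

theorem loopSum_mul_vertex (h : PathConcat e β) (i : ZMod q) :
    loopSum e β c i * e i = loopSum e β c i := by
  simp [loopSum, Finset.sum_mul, pathProd_mul_vertex h]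

theorem loopSum_succ_mul_arrow (h : PathConcat e β) (i : ZMod q) :
    loopSum e β c (i + 1) * pathProd e β i 1 = pathProd e β i 1 * loopSum e β c i := by
  simp only [loopSum, Finset.sum_mul, Finset.mul_sum, smul_mul_assoc, mul_smul_comm,
    pathProd_succ_mul_arrow_of_natCast_eq_zero h i (a := _ * q) (by simp)]

theorem map_loopSum_of_rotate {F : Type*} [FunLike F R R] [AlgHomClass F k R R] (f : F)
    (hfe : ∀ i, f (e i) = e (i + 1)) (hfβ : ∀ i, f (β i) = β (i + 1)) (i : ZMod q) :
    f (loopSum e β c i) = loopSum e β c (i + 1) := by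
  simp [loopSum, map_pathProd_of_rotate f hfe hfβ]

theorem vertexTwist_mul_of_vertex_mul_eq_zero (h : PathConcat e β) {i : ZMod q} {x : R}
    (hx : e i * x = 0) : vertexTwist e β c i * x = x := by
  rw [vertexTwist, add_mul, sub_mul, one_mul, hx, ← loopSum_mul_vertex h, mul_assoc, hx]
  simp

theorem vertexTwist_mul_of_vertex_mul_eq_self {i : ZMod q} {x : R} (hx : e i * x = x) :
    vertexTwist e β c i * x = loopSum e β c i * x := by
  rw [vertexTwist, add_mul, sub_mul, one_mul, hx, sub_self, zero_add]

theorem mul_vertexTwist_of_mul_vertex_eq_zero (h : PathConcat e β) {i : ZMod q} {x : R}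
    (hx : x * e i = 0) : x * vertexTwist e β c i = x := by
  rw [vertexTwist, mul_add, mul_sub, mul_one, hx, ← vertex_mul_loopSum h, ← mul_assoc, hx]
  simp

theorem mul_vertexTwist_of_mul_vertex_eq_self {i : ZMod q} {x : R} (hx : x * e i = x) :
    x * vertexTwist e β c i = x * loopSum e β c i := by
  rw [vertexTwist, mul_add, mul_sub, mul_one, hx, sub_self, zero_add]

theorem vertexTwist_commute_vertex (h : PathConcat e β) (i j : ZMod q) :
    Commute (vertexTwist e β c i) (e j) := by
  have hee := vertex_mul_vertex h
  by_cases hij : j = i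
  · subst hij
    rw [Commute, SemiconjBy, vertexTwist_mul_of_vertex_mul_eq_self (by simp [hee]),
      mul_vertexTwist_of_mul_vertex_eq_self (by simp [hee]), loopSum_mul_vertex h,
      vertex_mul_loopSum h]
  · rw [Commute, SemiconjBy, vertexTwist_mul_of_vertex_mul_eq_zero h (by simp [hee, Ne.symm hij]),
      mul_vertexTwist_of_mul_vertex_eq_zero h (by simp [hee, hij])]

theorem vertexTwist_succ_mul_arrow (h : PathConcat e β) (i j : ZMod q) :
    vertexTwist e β c (i + 1) * pathProd e β j 1 = pathProd e β j 1 * vertexTwist e β c i := by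
  by_cases hij : j = i
  · subst hij
    rw [vertexTwist_mul_of_vertex_mul_eq_self (by simp [vertex_mul_pathProd h]),
      mul_vertexTwist_of_mul_vertex_eq_self (by simp [pathProd_mul_vertex h]),
      loopSum_succ_mul_arrow h]
  · rw [vertexTwist_mul_of_vertex_mul_eq_zero h (by simp [vertex_mul_pathProd h, Ne.symm hij]),
      mul_vertexTwist_of_mul_vertex_eq_zero h (by simp [pathProd_mul_vertex h, hij])]

theorem map_vertexTwist_of_rotate {F : Type*} [FunLike F R R] [AlgHomClass F k R R] (f : F)
    (hfe : ∀ i, f (e i) = e (i + 1)) (hfβ : ∀ i, f (β i) = β (i + 1)) (i : ZMod q) :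
    f (vertexTwist e β c i) = vertexTwist e β c (i + 1) := by
  rw [vertexTwist, map_add, map_sub, map_one, hfe, map_loopSum_of_rotate f hfe hfβ, vertexTwist]

theorem map_arrow_eq_vertexTwist_mul (h : PathConcat e β) {F : Type*} [FunLike F R R]
    [MulHomClass F R R] (f : F) (hfe : ∀ i, f (e i) = e i) (hfβ : ∀ i, i ≠ 0 → f (β i) = β i)
    (hfβ₀ : f (β 0) = loopSum e β c 1 * β 0) (j : ZMod q) :
    f (pathProd e β j 1) = vertexTwist e β c 1 * pathProd e β j 1 := by
  by_cases hj : j = 0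
  · subst hj
    rw [vertexTwist_mul_of_vertex_mul_eq_self (by simp [vertex_mul_pathProd h]), pathProd_one,
      map_mul, hfβ₀, hfe, mul_assoc]
  · rw [vertexTwist_mul_of_vertex_mul_eq_zero h (by simp [vertex_mul_pathProd h, hj]),
      pathProd_one, map_mul, hfβ j hj, hfe]

theorem isUnit_vertexTwist (h : PathConcat e β) {L : ℕ}
    (hlong : ∀ (i : ZMod q) (a : ℕ), L < a → pathProd e β i a = 0) (hq : 0 < q) (hN : 0 < N)
    (hc : IsUnit (c ⟨0, hN⟩)) (i : ZMod q) : IsUnit (vertexTwist e β c i) := by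
  set s₀ : Fin N := ⟨0, hN⟩
  set r := ∑ s ∈ Finset.univ.erase s₀, c s • pathProd e β i (s * q)
  have hsplit : loopSum e β c i = c s₀ • e i + r := by
    rw [loopSum, ← Finset.add_sum_erase _ _ (Finset.mem_univ s₀)]
    congr 1
    simp [s₀]
  have hnil : IsNilpotent r := by
    refine Commute.isNilpotent_sum (fun s hs => .smul ?_ _) fun s t _ _ =>
      ((commute_pathProd_of_natCast_eq_zero h i (by simp) (by simp)).smul_left _).smul_right _
    refine isNilpotent_pathProd_of_natCast_eq_zero h hlong i (by simp) (Nat.mul_pos ?_ hq)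
    exact Nat.pos_of_ne_zero fun hzero => (Finset.mem_erase.mp hs).1 (Fin.ext hzero)
  have hre : Commute r (e i) :=
    Commute.sum_left _ _ _ fun s _ =>
      (commute_pathProd_of_natCast_eq_zero h i (b := 0) (by simp) (by simp)).smul_left _
  have hidem : IsIdempotentElem (e i) := by simp [IsIdempotentElem, vertex_mul_vertex h]
  rw [vertexTwist, hsplit, ← add_assoc]
  exact hnil.isUnit_add_left_of_commute (isUnit_one_sub_add_smul hidem hc)
    (((Commute.one_right r).sub_right hre).add_right (hre.smul_right _))

theorem adjoin_vertex_union_arrow_eq_top (h : PathConcat e β) {ι : Type*}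
    (B : Module.Basis ι k R) (hB : ∀ x, ∃ i a, B x = pathProd e β i a) :
    Algebra.adjoin k (range e ∪ range fun j => pathProd e β j 1) = ⊤ := by
  have hpath : ∀ a i, pathProd e β i a ∈
      Algebra.adjoin k (range e ∪ range fun j => pathProd e β j 1) := by
    intro a
    induction a with
    | zero => exact fun i => Algebra.subset_adjoin (.inl ⟨i, rfl⟩)
    | succ a ih =>
      intro i
      rw [pathProd_succ h]
      exact mul_mem (Algebra.subset_adjoin (.inr ⟨_, rfl⟩)) (ih i)
  refine eq_top_iff.mpr fun x _ =>
    (Subalgebra.mem_toSubmodule _).mp <| Submodule.span_le.mpr ?_ (B.mem_span x)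
  rintro _ ⟨x, rfl⟩
  obtain ⟨i, a, hx⟩ := hB x
  exact hx ▸ hpath a i

end CyclicPaths

/-- Here `𝒩` is the selfinjective Nakayama algebra `𝒩_{nm,tm}`, presented by:
idempotents `e i` and arrows `β i` (`i ∈ ℤ/nm`), the paths `β_{i,a}` (`0 ≤ a ≤ tm`) form a
`k`-basis, `∑ e i = 1`, and products of basis paths are concatenations when defined and of
length `≤ tm`, and `0` otherwise. With `N = ⌊(t+n−1)/n⌋`, `c ∈ 𝒮_N(k)` (a sequence
`c : Fin N → k` with first entry nonzero), `u_c = ∑_{i=1}^N c_i β_{1,(i−1)nm}`, `μ = μ_c`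
and `ρ` the rotation, the element `1 − e_1 + u_c` is a unit `v` of `𝒩` and
`ρ ∘ μ_c = σ ∘ μ_c ∘ ρ`, where `σ(x) = v⁻¹ x v`. -/
theorem rho_mu_comm_mod_inner {k : Type*} [Field k] (m n t : ℕ)
    (hm : 0 < m) (hn : 0 < n) (ht : 0 < t)
    {𝒩 : Type*} [Ring 𝒩] [Algebra k 𝒩] (e β : ZMod (n * m) → 𝒩)
    (hbasis : ∃ B : Module.Basis (ZMod (n * m) × Fin (t * m + 1)) k 𝒩,
      ∀ x, B x = pathProd e β x.1 x.2)
    (hmul : ∀ (i j : ZMod (n * m)) (a b : ℕ), a ≤ t * m → b ≤ t * m →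
      pathProd e β j a * pathProd e β i b =
        if j = i + (b : ZMod (n * m)) ∧ a + b ≤ t * m then pathProd e β i (a + b) else 0)
    (c : Fin ((t + n - 1) / n) → k) (hc : c ⟨0, Nat.div_pos (by omega) hn⟩ ≠ 0)
    (μ : 𝒩 ≃ₐ[k] 𝒩)
    (hμe : ∀ i, μ (e i) = e i)
    (hμβ : ∀ i, i ≠ 0 → μ (β i) = β i)
    (hμβ0 : μ (β 0) =
      (∑ i : Fin ((t + n - 1) / n), c i • pathProd e β 1 ((i : ℕ) * (n * m))) * β 0)
    (ρ : 𝒩 ≃ₐ[k] 𝒩)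
    (hρe : ∀ i, ρ (e i) = e (i + 1)) (hρβ : ∀ i, ρ (β i) = β (i + 1)) :
    ∃ v : 𝒩ˣ,
      (v : 𝒩) = 1 - e 1 +
          ∑ i : Fin ((t + n - 1) / n), c i • pathProd e β 1 ((i : ℕ) * (n * m)) ∧
      ∀ x : 𝒩, ρ (μ x) = ↑v⁻¹ * μ (ρ x) * ↑v := by
  obtain ⟨B, hB⟩ := hbasis
  have hL : 0 < t * m := Nat.mul_pos ht hm
  have h : PathConcat e β := pathConcat_of_truncated hL hmul
  have hunit : IsUnit (vertexTwist e β c 1) := isUnit_vertexTwist h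
    (pathProd_eq_zero_of_lt hL hmul) (Nat.mul_pos hn hm) _ (Ne.isUnit hc) 1
  have hμ := map_arrow_eq_vertexTwist_mul h μ hμe hμβ hμβ0
  have hρ := map_pathProd_of_rotate ρ hρe hρβ
  have hconj : ∀ x, vertexTwist e β c 1 * ρ (μ x) = μ (ρ x) * vertexTwist e β c 1 := by
    refine mul_map_eq_map_mul_of_adjoin_eq_top
      (adjoin_vertex_union_arrow_eq_top h B fun x => ⟨x.1, x.2, hB x⟩)
      ((ρ : 𝒩 →ₐ[k] 𝒩).comp μ) ((μ : 𝒩 →ₐ[k] 𝒩).comp ρ) _ ?_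
    rintro _ (⟨i, rfl⟩ | ⟨j, rfl⟩)
    · simp [hμe, hρe, (vertexTwist_commute_vertex h 1 (i + 1)).eq]
    · show _ * ρ (μ _) = μ (ρ _) * _
      rw [hμ, map_mul, map_vertexTwist_of_rotate ρ hρe hρβ, hρ, hμ,
        vertexTwist_succ_mul_arrow h, mul_assoc]
  refine ⟨hunit.unit, rfl, fun x => ?_⟩
  rw [mul_assoc, hunit.unit_spec, ← hconj, ← mul_assoc, hunit.val_inv_mul, one_mul]
end

section
/- Let k be a field and N ≥ 1. For each sequence c = (c_1,…,c_N) with c_i ∈ k and c_1 ≠ 0 there is a unique k-algebra automorphism f_c of k[x]/(x^{N+1}) with f_c(x) = Σ_{i=1}^N c_i x^i; every k-algebra automorphism of k[x]/(x^{N+1}) equals f_c for a unique such c; and f_{c'} ∘ f_c = f_{c·c'}, where c·c' is the product of 𝒮_N(k). In particular, the group 𝒮_N(k) is isomorphic to the group of k-algebra automorphisms of k[x]/(x^{N+1}). -/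
/-- The product of the group `𝒮_N(k)` of sequences `c = (c_1,…,c_N)` with `c_1 ≠ 0`
(indexed here by `Fin N`, index `i` corresponding to `c_{i+1}`):
`(c·c')_i = Σ_{j=1}^i c_j Σ_{k_1+⋯+k_j=i} c'_{k_1}⋯c'_{k_j}`. The inner sum over
compositions of `i` into `j` positive parts is expressed as the coefficient of `X^i`
in `(Σ_{s=1}^N c'_s X^s)^j`. -/
noncomputable def seqMul {k : Type*} [CommRing k] {N : ℕ} (c c' : Fin N → k) : Fin N → k :=
  fun i => ∑ j : Fin ((i : ℕ) + 1),
    c (Fin.castLE i.isLt j) *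
      ((∑ s : Fin N, Polynomial.C (c' s) * Polynomial.X ^ ((s : ℕ) + 1)) ^ ((j : ℕ) + 1)).coeff
        ((i : ℕ) + 1)

/-- The truncated polynomial algebra `k[x]/(x^{N+1})`. -/
abbrev TruncPolyAlg (k : Type*) [Field k] (N : ℕ) : Type _ :=
  Polynomial k ⧸ Ideal.span {(Polynomial.X : Polynomial k) ^ (N + 1)}

/-- The image `x` of the variable `X` in `k[x]/(x^{N+1})`. -/
noncomputable def truncX (k : Type*) [Field k] (N : ℕ) : TruncPolyAlg k N :=
  Ideal.Quotient.mk _ Polynomial.X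

/-! An algebra endomorphism of `k[x]/(x^{N+1})` is determined by the image `p(x)` of `x`, and acts
by `q(x) ↦ q(p(x))`; it exists exactly when `p(x)` is nilpotent, i.e. `p(0) = 0`. If
`p = p₁X + ⋯` with `p₁ ≠ 0`, substituting `p` multiplies the lowest term `aXᵐ` of `q` by `p₁ᵐ`
and creates no lower terms, so the endomorphism is injective, hence bijective by finite
dimensionality. Conversely, if `p₁ = 0` then `X^{2N} ∣ p^N`, so `x^N` is killed. Finally, with
`P_c = ∑ cᵢ Xⁱ`, `f_{c'} (f_c x) = P_c(P_{c'}(x))`, and the coefficients of `P_c ∘ P_{c'}` up to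
degree `N` are those of `c·c'`. -/

open Polynomial

namespace Polynomial

variable {R : Type*} [CommSemiring R]

lemma coeff_pow_of_lt_of_X_dvd {p : R[X]} (hp : X ∣ p) {m n : ℕ} (h : m < n) :
    (p ^ n).coeff m = 0 :=
  X_pow_dvd_iff.mp (pow_dvd_pow_of_dvd hp n) m h

lemma coeff_pow_self_of_X_dvd {p : R[X]} (hp : X ∣ p) (n : ℕ) :
    (p ^ n).coeff n = p.coeff 1 ^ n := by
  obtain ⟨q, rfl⟩ := hp
  rw [mul_pow, coeff_X_pow_mul', if_pos le_rfl, Nat.sub_self, coeff_zero_eq_eval_zero,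
    eval_pow, ← coeff_zero_eq_eval_zero, ← coeff_X_mul q 0]

lemma coeff_comp_natTrailingDegree {p : R[X]} (hp : X ∣ p) (q : R[X]) :
    (q.comp p).coeff q.natTrailingDegree = q.trailingCoeff * p.coeff 1 ^ q.natTrailingDegree := by
  rcases eq_or_ne q 0 with rfl | hq
  · simp
  rw [comp_eq_sum_left, sum_def, finsetSum_coeff,
    Finset.sum_eq_single_of_mem _ (natTrailingDegree_mem_support_of_nonzero hq)]
  · rw [coeff_C_mul, coeff_pow_self_of_X_dvd hp, trailingCoeff]
  · intro e he hne
    have hlt : q.natTrailingDegree < e :=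
      (natTrailingDegree_le_of_mem_supp e he).lt_of_ne' hne
    rw [coeff_C_mul, coeff_pow_of_lt_of_X_dvd hp hlt, mul_zero]

lemma X_pow_dvd_of_X_pow_dvd_comp [NoZeroDivisors R] {p q : R[X]} (hp : X ∣ p)
    (hp₁ : p.coeff 1 ≠ 0) {n : ℕ} (h : X ^ n ∣ q.comp p) : X ^ n ∣ q := by
  refine X_pow_dvd_iff.mpr fun d hd => by_contra fun hqd => ?_
  have hq : q ≠ 0 := by rintro rfl; exact hqd (coeff_zero d)
  have := X_pow_dvd_iff.mp h _ ((natTrailingDegree_le_of_ne_zero hqd).trans_lt hd)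
  rw [coeff_comp_natTrailingDegree hp] at this
  exact mul_ne_zero (mt trailingCoeff_eq_zero.mp hq) (pow_ne_zero _ hp₁) this

end Polynomial

section SeqPoly

variable {R : Type*} [CommSemiring R] {N : ℕ}

noncomputable def seqPoly (c : Fin N → R) : R[X] :=
  ∑ i : Fin N, C (c i) * X ^ ((i : ℕ) + 1)

lemma coeff_seqPoly_zero (c : Fin N → R) : (seqPoly c).coeff 0 = 0 := by
  simp [seqPoly, finsetSum_coeff, coeff_X_pow]

lemma X_dvd_seqPoly (c : Fin N → R) : X ∣ seqPoly c :=
  X_dvd_iff.mpr (coeff_seqPoly_zero c)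

lemma coeff_seqPoly_succ (c : Fin N → R) (i : Fin N) :
    (seqPoly c).coeff ((i : ℕ) + 1) = c i := by
  simp [seqPoly, finsetSum_coeff, coeff_X_pow, Fin.val_inj]

lemma aeval_seqPoly {A : Type*} [Semiring A] [Algebra R A] (c : Fin N → R) (y : A) :
    aeval y (seqPoly c) = ∑ i : Fin N, c i • y ^ ((i : ℕ) + 1) := by
  simp [seqPoly, Algebra.smul_def]

end SeqPoly

/-- In `(∑ c_j X^j) ∘ (∑ c'_s X^s)` the powers `j > i` contribute nothing to the coefficient of
`Xⁱ`, which is why `seqMul` sums over `j ≤ i` only. -/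
lemma coeff_seqPoly_comp_seqPoly {R : Type*} [CommRing R] {N : ℕ} (c c' : Fin N → R)
    (i : Fin N) : ((seqPoly c).comp (seqPoly c')).coeff ((i : ℕ) + 1) = seqMul c c' i := by
  have hcomp :
      (seqPoly c).comp (seqPoly c') = ∑ j : Fin N, C (c j) * seqPoly c' ^ ((j : ℕ) + 1) := by
    simp [seqPoly, sum_comp]
  let F : Fin N → R := fun j => c j * (seqPoly c' ^ ((j : ℕ) + 1)).coeff ((i : ℕ) + 1)
  have hvanish : ∀ j ∉ Finset.univ.map (Fin.castLEEmb i.isLt), F j = 0 := by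
    intro j hj
    have hij : (i : ℕ) + 1 < (j : ℕ) + 1 := by
      by_contra! hji
      exact hj (Finset.mem_map.mpr ⟨⟨j, by omega⟩, Finset.mem_univ _, rfl⟩)
    exact mul_eq_zero_of_right _ (coeff_pow_of_lt_of_X_dvd (X_dvd_seqPoly c') hij)
  calc ((seqPoly c).comp (seqPoly c')).coeff ((i : ℕ) + 1)
      = ∑ j : Fin N, F j := by simp [hcomp, finsetSum_coeff, F]
    _ = ∑ j ∈ Finset.univ.map (Fin.castLEEmb i.isLt), F j :=
        (Finset.sum_subset (Finset.subset_univ _) fun j _ hj => hvanish j hj).symm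
    _ = seqMul c c' i := by rw [Finset.sum_map]; rfl

namespace TruncPolyAlg

variable {k : Type*} [Field k] {N : ℕ}

lemma mk_eq_aeval_truncX (p : k[X]) :
    Ideal.Quotient.mk (Ideal.span {(X : k[X]) ^ (N + 1)}) p = aeval (truncX k N) p := by
  rw [truncX, ← Ideal.Quotient.mkₐ_eq_mk k, aeval_algHom_apply, aeval_X_left_apply]

lemma exists_aeval_truncX_eq (a : TruncPolyAlg k N) : ∃ p : k[X], aeval (truncX k N) p = a := by
  obtain ⟨p, rfl⟩ := Ideal.Quotient.mk_surjective a
  exact ⟨p, (mk_eq_aeval_truncX p).symm⟩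

lemma aeval_truncX_eq_zero_iff {p : k[X]} : aeval (truncX k N) p = 0 ↔ X ^ (N + 1) ∣ p := by
  rw [← mk_eq_aeval_truncX, Ideal.Quotient.eq_zero_iff_mem, Ideal.mem_span_singleton]

lemma aeval_truncX_eq_iff {p q : k[X]} :
    aeval (truncX k N) p = aeval (truncX k N) q ↔ ∀ m ≤ N, p.coeff m = q.coeff m := by
  rw [← sub_eq_zero, ← map_sub, aeval_truncX_eq_zero_iff, X_pow_dvd_iff]
  simp only [coeff_sub, sub_eq_zero, Nat.lt_succ_iff]

lemma truncX_pow_succ : truncX k N ^ (N + 1) = 0 := by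
  simpa using aeval_truncX_eq_zero_iff.mpr (dvd_refl ((X : k[X]) ^ (N + 1)))

lemma truncX_pow_ne_zero : truncX k N ^ N ≠ 0 := fun h => by
  have hdvd := aeval_truncX_eq_zero_iff.mp ((aeval_X_pow (n := N) (truncX k N)).trans h)
  simpa using X_pow_dvd_iff.mp hdvd N N.lt_succ_self

lemma algHom_ext {B : Type*} [Semiring B] [Algebra k B] {f g : TruncPolyAlg k N →ₐ[k] B}
    (h : f (truncX k N) = g (truncX k N)) : f = g :=
  Ideal.Quotient.algHom_ext k (Polynomial.algHom_ext h)

lemma algEquiv_ext {f g : TruncPolyAlg k N ≃ₐ[k] TruncPolyAlg k N}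
    (h : f (truncX k N) = g (truncX k N)) : f = g :=
  AlgEquiv.coe_toAlgHom_injective (algHom_ext h)

instance : Module.Finite k (TruncPolyAlg k N) :=
  (monic_X_pow (N + 1)).finite_quotient

noncomputable def lift {B : Type*} [Semiring B] [Algebra k B] (y : B) (hy : y ^ (N + 1) = 0) :
    TruncPolyAlg k N →ₐ[k] B :=
  Ideal.Quotient.liftₐ _ (aeval y) fun p hp => by
    obtain ⟨q, rfl⟩ := Ideal.mem_span_singleton'.mp hp
    rw [map_mul, map_pow, aeval_X, hy, mul_zero]

lemma lift_truncX {B : Type*} [Semiring B] [Algebra k B] (y : B) (hy : y ^ (N + 1) = 0) :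
    lift y hy (truncX k N) = y :=
  aeval_X y

lemma aeval_truncX_pow_succ_of_X_dvd {p : k[X]} (hp : X ∣ p) :
    aeval (truncX k N) p ^ (N + 1) = 0 := by
  obtain ⟨q, rfl⟩ := hp
  rw [map_mul, aeval_X, mul_pow, truncX_pow_succ, zero_mul]

noncomputable def compHom (p : k[X]) (hp : X ∣ p) : TruncPolyAlg k N →ₐ[k] TruncPolyAlg k N :=
  lift (aeval (truncX k N) p) (aeval_truncX_pow_succ_of_X_dvd hp)

lemma compHom_truncX {p : k[X]} (hp : X ∣ p) :
    compHom (N := N) p hp (truncX k N) = aeval (truncX k N) p :=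
  lift_truncX _ _

lemma compHom_aeval_truncX {p : k[X]} (hp : X ∣ p) (q : k[X]) :
    compHom p hp (aeval (truncX k N) q) = aeval (truncX k N) (q.comp p) := by
  rw [← aeval_algHom_apply, compHom_truncX, aeval_comp]

lemma compHom_injective {p : k[X]} (hp : X ∣ p) (hp₁ : p.coeff 1 ≠ 0) :
    Function.Injective (compHom (N := N) p hp) := by
  refine (injective_iff_map_eq_zero _).mpr fun a ha => ?_
  obtain ⟨q, rfl⟩ := exists_aeval_truncX_eq a
  rw [compHom_aeval_truncX, aeval_truncX_eq_zero_iff] at ha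
  exact aeval_truncX_eq_zero_iff.mpr (X_pow_dvd_of_X_pow_dvd_comp hp hp₁ ha)

noncomputable def compEquiv (p : k[X]) (hp : X ∣ p) (hp₁ : p.coeff 1 ≠ 0) :
    TruncPolyAlg k N ≃ₐ[k] TruncPolyAlg k N :=
  AlgEquiv.ofBijective (compHom p hp)
    ⟨compHom_injective hp hp₁,
      (LinearMap.injective_iff_surjective (f := (compHom p hp).toLinearMap)).mp
        (compHom_injective hp hp₁)⟩

lemma compEquiv_truncX {p : k[X]} (hp : X ∣ p) (hp₁ : p.coeff 1 ≠ 0) :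
    compEquiv (N := N) p hp hp₁ (truncX k N) = aeval (truncX k N) p :=
  compHom_truncX (N := N) hp

lemma X_dvd_of_apply_truncX_eq {f : TruncPolyAlg k N →ₐ[k] TruncPolyAlg k N} {p : k[X]}
    (hf : f (truncX k N) = aeval (truncX k N) p) : X ∣ p := by
  have hpow : aeval (truncX k N) (p ^ (N + 1)) = 0 := by
    rw [map_pow, ← hf, ← map_pow, truncX_pow_succ, map_zero]
  exact prime_X.dvd_of_dvd_pow
    ((dvd_pow_self (X : k[X]) N.succ_ne_zero).trans (aeval_truncX_eq_zero_iff.mp hpow))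

lemma coeff_one_ne_zero_of_apply_truncX_eq (hN : 1 ≤ N)
    {f : TruncPolyAlg k N →ₐ[k] TruncPolyAlg k N} (hf : Function.Injective f) {p : k[X]}
    (hfp : f (truncX k N) = aeval (truncX k N) p) : p.coeff 1 ≠ 0 := by
  intro hp₁
  have hX2 : X ^ 2 ∣ p := X_pow_dvd_iff.mpr fun d hd => by
    interval_cases d
    exacts [X_dvd_iff.mp (X_dvd_of_apply_truncX_eq hfp), hp₁]
  have hpow : X ^ (N + 1) ∣ p ^ N :=
    (pow_dvd_pow X (by omega : N + 1 ≤ 2 * N)).trans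
      (pow_mul (X : k[X]) 2 N ▸ pow_dvd_pow_of_dvd hX2 N)
  have hzero : f (truncX k N ^ N) = f 0 := by
    rw [map_pow, hfp, ← map_pow, aeval_truncX_eq_zero_iff.mpr hpow, map_zero]
  exact truncX_pow_ne_zero (hf hzero)

lemma aeval_truncX_eq_aeval_seqPoly {p : k[X]} (hp : X ∣ p) :
    aeval (truncX k N) p =
      aeval (truncX k N) (seqPoly fun i : Fin N => p.coeff ((i : ℕ) + 1)) := by
  refine aeval_truncX_eq_iff.mpr fun m hm => ?_
  rcases m with _ | m
  · rw [X_dvd_iff.mp hp, coeff_seqPoly_zero]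
  · exact (coeff_seqPoly_succ (fun i : Fin N => p.coeff ((i : ℕ) + 1)) ⟨m, hm⟩).symm

lemma aeval_truncX_seqPoly_injective :
    Function.Injective fun c : Fin N → k => aeval (truncX k N) (seqPoly c) := by
  intro c c' h
  funext i
  simpa [coeff_seqPoly_succ] using aeval_truncX_eq_iff.mp h ((i : ℕ) + 1) i.isLt

lemma aeval_truncX_seqPoly_comp (c c' : Fin N → k) :
    aeval (truncX k N) ((seqPoly c).comp (seqPoly c')) =
      aeval (truncX k N) (seqPoly (seqMul c c')) := by
  refine aeval_truncX_eq_iff.mpr fun m hm => ?_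
  rcases m with _ | m
  · rw [coeff_zero_eq_eval_zero, eval_comp, ← coeff_zero_eq_eval_zero, coeff_seqPoly_zero,
      ← coeff_zero_eq_eval_zero, coeff_seqPoly_zero, coeff_seqPoly_zero]
  · rw [coeff_seqPoly_comp_seqPoly c c' ⟨m, hm⟩, coeff_seqPoly_succ _ ⟨m, hm⟩]

lemma algHom_comp_eq_of_seqPoly {f f' g : TruncPolyAlg k N →ₐ[k] TruncPolyAlg k N}
    {c c' : Fin N → k} (hf : f (truncX k N) = aeval (truncX k N) (seqPoly c))
    (hf' : f' (truncX k N) = aeval (truncX k N) (seqPoly c'))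
    (hg : g (truncX k N) = aeval (truncX k N) (seqPoly (seqMul c c'))) : f'.comp f = g :=
  algHom_ext <| by
    rw [AlgHom.comp_apply, hf, ← aeval_algHom_apply, hf', ← aeval_comp,
      aeval_truncX_seqPoly_comp, hg]

end TruncPolyAlg

open TruncPolyAlg in
/-- let `k` be a field and `N ≥ 1`. For each sequence `c = (c_1,…,c_N)` with
`c_1 ≠ 0` there is a unique `k`-algebra automorphism `f_c` of `k[x]/(x^{N+1})` with
`f_c(x) = Σ_{i=1}^N c_i x^i`; every `k`-algebra automorphism of `k[x]/(x^{N+1})` equals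
`f_c` for a unique such `c`; and `f_{c'} ∘ f_c = f_{c·c'}`, where `c·c'` is the product of
`𝒮_N(k)`. In particular, `𝒮_N(k)` is isomorphic to the automorphism group of
`k[x]/(x^{N+1})`. -/
theorem truncPoly_aut_classification (k : Type*) [Field k] (N : ℕ) (hN : 1 ≤ N) :
    (∀ c : Fin N → k, c ⟨0, hN⟩ ≠ 0 →
      ∃! f : TruncPolyAlg k N ≃ₐ[k] TruncPolyAlg k N,
        f (truncX k N) = ∑ i : Fin N, c i • truncX k N ^ ((i : ℕ) + 1)) ∧
    (∀ f : TruncPolyAlg k N ≃ₐ[k] TruncPolyAlg k N,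
      ∃! c : {c : Fin N → k // c ⟨0, hN⟩ ≠ 0},
        f (truncX k N) = ∑ i : Fin N, c.1 i • truncX k N ^ ((i : ℕ) + 1)) ∧
    (∀ (c c' : Fin N → k), c ⟨0, hN⟩ ≠ 0 → c' ⟨0, hN⟩ ≠ 0 →
      ∀ (fc fc' fcc' : TruncPolyAlg k N ≃ₐ[k] TruncPolyAlg k N),
        fc (truncX k N) = (∑ i : Fin N, c i • truncX k N ^ ((i : ℕ) + 1)) →
        fc' (truncX k N) = (∑ i : Fin N, c' i • truncX k N ^ ((i : ℕ) + 1)) →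
        fcc' (truncX k N) = (∑ i : Fin N, seqMul c c' i • truncX k N ^ ((i : ℕ) + 1)) →
        ∀ a, fc' (fc a) = fcc' a) := by
  simp only [← aeval_seqPoly]
  refine ⟨fun c hc => ?_, fun f => ?_, fun c c' _ _ fc fc' fcc' hc hc' hcc' a => ?_⟩
  · have hc₁ : (seqPoly c).coeff 1 ≠ 0 := (coeff_seqPoly_succ c ⟨0, hN⟩).trans_ne hc
    refine ⟨compEquiv _ (X_dvd_seqPoly c) hc₁, compEquiv_truncX _ _,
      fun g hg => algEquiv_ext ?_⟩
    rw [hg, compEquiv_truncX]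
  · obtain ⟨p, hp⟩ := exists_aeval_truncX_eq (f (truncX k N))
    have hX := X_dvd_of_apply_truncX_eq (f := f.toAlgHom) hp.symm
    have hp₁ := coeff_one_ne_zero_of_apply_truncX_eq hN (f := f.toAlgHom) f.injective hp.symm
    have hf : f (truncX k N) =
        aeval (truncX k N) (seqPoly fun i : Fin N => p.coeff ((i : ℕ) + 1)) := by
      rw [← hp, aeval_truncX_eq_aeval_seqPoly hX]
    exact ⟨⟨_, hp₁⟩, hf, fun c hc =>
      Subtype.ext (aeval_truncX_seqPoly_injective (hc.symm.trans hf))⟩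
  · exact AlgHom.congr_fun (algHom_comp_eq_of_seqPoly (f := fc.toAlgHom) (f' := fc'.toAlgHom)
      (g := fcc'.toAlgHom) hc hc' hcc') a
end
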